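/- If X is uniformly distributed on Σⁿ and Y is a random variable with H(Y) ≤ K, and each coordinate X_i can be guessed from Y correctly with probability at least 1/2 + γ (for a binary alphabet), then n·h(1/2−γ) + K ≥ n, where h is the binary entropy function; consequently if K < n·(1 − h(1/2−γ)) we reach a contradiction, so such a Y cannot exist for n > K/(1−h(1/2−γ)). -/

import Mathlib

open Finset

/-- Shannon entropy (base 2) of a random variable `Z` on a finite probability
space with mass function `μ`. -/
noncomputable def entropy {Ω β : Type*} [Fintype Ω] [Fintype β] [DecidableEq β]
    (μ : Ω → ℝ) (Z : Ω → β) : ℝ :=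
  -∑ y : β, (∑ ω ∈ univ.filter (fun ω => Z ω = y), μ ω)
      * Real.logb 2 (∑ ω ∈ univ.filter (fun ω => Z ω = y), μ ω)

/-- Binary entropy function (base 2). -/
noncomputable def binEnt (p : ℝ) : ℝ :=
  -(p * Real.logb 2 p) - (1 - p) * Real.logb 2 (1 - p)

/-! Since `X` is uniform, `n ≤ H(X, Y)`. By Gibbs' inequality, `H(X, Y)` is at most the cross
entropy of `(X, Y)` against the model in which `Y` keeps its law and, given `Y = y`, the bits
`X i` are independent and equal to `g i y` except with probability `e = 1/2 - γ`. That cross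
entropy splits as `H(Y)` plus one term per bit, and each of those is at most `h(e)` because
`g i (Y)` guesses `X i` correctly with probability at least `1 - e`. -/

open Real

namespace GuessingBound

section Law

variable {Ω β : Type*} [Fintype Ω] [DecidableEq β]

def law (μ : Ω → ℝ) (Z : Ω → β) (z : β) : ℝ :=
  ∑ ω ∈ univ.filter (fun ω => Z ω = z), μ ω

variable {μ : Ω → ℝ}

lemma law_nonneg (hμ0 : ∀ ω, 0 ≤ μ ω) (Z : Ω → β) (z : β) : 0 ≤ law μ Z z :=
  sum_nonneg fun ω _ => hμ0 ω

lemma le_law (hμ0 : ∀ ω, 0 ≤ μ ω) (Z : Ω → β) (ω : Ω) : μ ω ≤ law μ Z (Z ω) :=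
  single_le_sum (fun ω' _ => hμ0 ω') (by simp)

lemma law_pos (hμ0 : ∀ ω, 0 ≤ μ ω) (Z : Ω → β) {ω : Ω} (hω : μ ω ≠ 0) :
    0 < law μ Z (Z ω) :=
  ((hμ0 ω).lt_of_ne' hω).trans_le (le_law hμ0 Z ω)

lemma sum_law [Fintype β] (μ : Ω → ℝ) (Z : Ω → β) : ∑ z, law μ Z z = ∑ ω, μ ω :=
  sum_fiberwise univ Z μ

lemma sum_mul_comp_eq_sum_law_mul [Fintype β] (μ : Ω → ℝ) (Z : Ω → β) (f : β → ℝ) :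
    ∑ ω, μ ω * f (Z ω) = ∑ z, law μ Z z * f z := by
  rw [← sum_fiberwise univ Z (fun ω => μ ω * f (Z ω))]
  refine sum_congr rfl fun z _ => ?_
  rw [law, sum_mul]
  exact sum_congr rfl fun ω hω => by rw [(mem_filter.1 hω).2]

lemma law_prodMk_le_law_fst {γ : Type*} [DecidableEq γ]
    (hμ0 : ∀ ω, 0 ≤ μ ω) (X : Ω → β) (Y : Ω → γ) (x : β) (y : γ) :
    law μ (fun ω => (X ω, Y ω)) (x, y) ≤ law μ X x :=
  sum_le_sum_of_subset_of_nonneg (fun ω hω => by simp_all) (fun ω _ _ => hμ0 ω)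

lemma entropy_eq_neg_sum_mul_logb_law [Fintype β] (μ : Ω → ℝ) (Z : Ω → β) :
    entropy μ Z = -∑ ω, μ ω * logb 2 (law μ Z (Z ω)) := by
  rw [sum_mul_comp_eq_sum_law_mul μ Z (fun z => logb 2 (law μ Z z))]
  rfl

end Law

lemma mul_log_sub_mul_log_le {p q : ℝ} (hp : 0 ≤ p) (hq : 0 ≤ q) (hpq : p ≠ 0 → 0 < q) :
    p * log q - p * log p ≤ q - p := by
  rcases hp.eq_or_lt with rfl | hp
  · simpa using hq
  have hq := hpq hp.ne'
  have hlog : log q - log p ≤ q / p - 1 := by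
    rw [← log_div hq.ne' hp.ne']
    exact log_le_sub_one_of_pos (div_pos hq hp)
  calc p * log q - p * log p = p * (log q - log p) := by ring
    _ ≤ p * (q / p - 1) := mul_le_mul_of_nonneg_left hlog hp.le
    _ = q - p := by field_simp

lemma sum_mul_logb_le_sum_mul_logb {β : Type*} [Fintype β] {p q : β → ℝ}
    (hp : ∀ z, 0 ≤ p z) (hq : ∀ z, 0 ≤ q z) (hpq : ∀ z, p z ≠ 0 → 0 < q z)
    (hsum : ∑ z, q z ≤ ∑ z, p z) :
    ∑ z, p z * logb 2 (q z) ≤ ∑ z, p z * logb 2 (p z) := by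
  have hlog : ∑ z, (p z * log (q z) - p z * log (p z)) ≤ 0 :=
    calc ∑ z, (p z * log (q z) - p z * log (p z))
        ≤ ∑ z, (q z - p z) := sum_le_sum fun z _ => mul_log_sub_mul_log_le (hp z) (hq z) (hpq z)
      _ ≤ 0 := by rw [sum_sub_distrib]; linarith
  simp only [logb, mul_div_assoc', ← sum_div]
  rw [sum_sub_distrib] at hlog
  exact div_le_div_of_nonneg_right (by linarith) (log_pos one_lt_two).le

section Entropy

variable {Ω β : Type*} [Fintype Ω] [Fintype β] [DecidableEq β] {μ : Ω → ℝ}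

lemma entropy_le_neg_sum_mul_logb (hμ0 : ∀ ω, 0 ≤ μ ω) (Z : Ω → β) {q : β → ℝ}
    (hq : ∀ z, 0 ≤ q z) (hμq : ∀ ω, μ ω ≠ 0 → 0 < q (Z ω)) (hsum : ∑ z, q z ≤ ∑ ω, μ ω) :
    entropy μ Z ≤ -∑ ω, μ ω * logb 2 (q (Z ω)) := by
  rw [sum_mul_comp_eq_sum_law_mul μ Z (fun z => logb 2 (q z)), entropy, neg_le_neg_iff]
  refine sum_mul_logb_le_sum_mul_logb (law_nonneg hμ0 Z) hq (fun z hz => ?_)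
    (by rwa [sum_law])
  obtain ⟨ω, hω, hμω⟩ := exists_ne_zero_of_sum_ne_zero hz
  rw [← (mem_filter.1 hω).2]
  exact hμq ω hμω

lemma neg_logb_le_entropy (hμ0 : ∀ ω, 0 ≤ μ ω) (hμ1 : ∑ ω, μ ω = 1) (Z : Ω → β) {p : ℝ}
    (hp : ∀ ω, μ ω ≠ 0 → law μ Z (Z ω) ≤ p) :
    -logb 2 p ≤ entropy μ Z := by
  have hterm : ∀ ω, μ ω * logb 2 (law μ Z (Z ω)) ≤ μ ω * logb 2 p := by
    intro ω
    by_cases hω : μ ω = 0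
    · simp [hω]
    exact mul_le_mul_of_nonneg_left
      (logb_le_logb_of_le one_lt_two (law_pos hμ0 Z hω) (hp ω hω)) (hμ0 ω)
  rw [entropy_eq_neg_sum_mul_logb_law, neg_le_neg_iff]
  calc ∑ ω, μ ω * logb 2 (law μ Z (Z ω)) ≤ ∑ ω, μ ω * logb 2 p := sum_le_sum fun ω _ => hterm ω
    _ = logb 2 p := by rw [← sum_mul, hμ1, one_mul]

end Entropy

lemma neg_sum_mul_logb_mul_prod {Ω ι : Type*} [Fintype Ω] [Fintype ι] {μ : Ω → ℝ}
    {a : Ω → ℝ} {b : ι → Ω → ℝ} (ha : ∀ ω, μ ω ≠ 0 → 0 < a ω)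
    (hb : ∀ ω, μ ω ≠ 0 → ∀ i, 0 < b i ω) :
    -∑ ω, μ ω * logb 2 (a ω * ∏ i, b i ω)
      = -∑ ω, μ ω * logb 2 (a ω) + ∑ i, -∑ ω, μ ω * logb 2 (b i ω) := by
  have hterm : ∀ ω, μ ω * logb 2 (a ω * ∏ i, b i ω)
      = μ ω * logb 2 (a ω) + ∑ i, μ ω * logb 2 (b i ω) := by
    intro ω
    by_cases hω : μ ω = 0
    · simp [hω]
    rw [logb_mul (ha ω hω).ne' (prod_pos fun i _ => hb ω hω i).ne',
      logb_prod _ _ fun i _ => (hb ω hω i).ne', mul_add, mul_sum]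
  simp only [hterm, sum_add_distrib, sum_neg_distrib, neg_add]
  rw [sum_comm]

/-- `guessWeight e b` is the law of a bit that equals `b` except with probability `e`. -/
def guessWeight (e : ℝ) (b b' : Bool) : ℝ :=
  if b = b' then 1 - e else e

lemma guessWeight_nonneg {e : ℝ} (he0 : 0 ≤ e) (he1 : e ≤ 1) (b b' : Bool) :
    0 ≤ guessWeight e b b' := by
  unfold guessWeight
  split_ifs <;> linarith

lemma sum_guessWeight (e : ℝ) (b : Bool) : ∑ b', guessWeight e b b' = 1 := by
  cases b <;> simp [guessWeight]

lemma sum_prod_guessWeight {ι : Type*} [Fintype ι] [DecidableEq ι] (e : ℝ) (b : ι → Bool) :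
    ∑ x : ι → Bool, ∏ i, guessWeight e (b i) (x i) = 1 := by
  rw [← Fintype.prod_sum]
  exact prod_eq_one fun i _ => sum_guessWeight e (b i)

section Guess

variable {Ω : Type*} [Fintype Ω] {μ : Ω → ℝ} {G B : Ω → Bool} {e : ℝ}

lemma le_of_not_guess_eq (hμ0 : ∀ ω, 0 ≤ μ ω) (hμ1 : ∑ ω, μ ω = 1)
    (hGB : 1 - e ≤ ∑ ω ∈ univ.filter (fun ω => G ω = B ω), μ ω) {ω : Ω} (hω : G ω ≠ B ω) :
    μ ω ≤ e := by
  have hsplit := sum_filter_add_sum_filter_not univ (fun ω => G ω = B ω) μ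
  have hle : μ ω ≤ ∑ ω' ∈ univ.filter (fun ω' => ¬G ω' = B ω'), μ ω' :=
    single_le_sum (fun ω' _ => hμ0 ω') (by simp [hω])
  linarith

lemma guessWeight_pos (hμ0 : ∀ ω, 0 ≤ μ ω) (hμ1 : ∑ ω, μ ω = 1) (he : e ≤ 1 / 2)
    (hGB : 1 - e ≤ ∑ ω ∈ univ.filter (fun ω => G ω = B ω), μ ω) {ω : Ω} (hω : μ ω ≠ 0) :
    0 < guessWeight e (G ω) (B ω) := by
  unfold guessWeight
  split_ifs with h
  · linarith
  · exact ((hμ0 ω).lt_of_ne' hω).trans_le (le_of_not_guess_eq hμ0 hμ1 hGB h)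

/-- Fano's inequality, in the form of a cross-entropy bound. -/
lemma neg_sum_mul_logb_guessWeight_le_binEnt (hμ1 : ∑ ω, μ ω = 1)
    (he0 : 0 ≤ e) (he : e ≤ 1 / 2)
    (hGB : 1 - e ≤ ∑ ω ∈ univ.filter (fun ω => G ω = B ω), μ ω) :
    -∑ ω, μ ω * logb 2 (guessWeight e (G ω) (B ω)) ≤ binEnt e := by
  set P := ∑ ω ∈ univ.filter (fun ω => G ω = B ω), μ ω
  have hsplit : ∑ ω, μ ω * logb 2 (guessWeight e (G ω) (B ω))
      = P * logb 2 (1 - e) + (1 - P) * logb 2 e := by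
    have hwrong := sum_filter_add_sum_filter_not univ (fun ω => G ω = B ω) μ
    simp only [guessWeight, apply_ite (logb 2), mul_ite, sum_ite, ← sum_mul]
    rw [show ∑ ω ∈ univ.filter (fun ω => ¬G ω = B ω), μ ω = 1 - P by linarith]
  have hlog : logb 2 e ≤ logb 2 (1 - e) := by
    rcases he0.eq_or_lt with rfl | he0
    · simp
    exact logb_le_logb_of_le one_lt_two he0 (by linarith)
  rw [hsplit, binEnt]
  nlinarith [mul_nonneg (sub_nonneg.2 hGB) (sub_nonneg.2 hlog)]

end Guess

end GuessingBound

open GuessingBound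

/-- If `X` is uniform on `{0,1}ⁿ`, `H(Y) ≤ K`, and each coordinate `X i` can be
guessed from `Y` with probability at least `1/2 + γ`, then
`n ≤ n · h(1/2 − γ) + K`. -/
theorem stmt4 {Ω F : Type*} [Fintype Ω] [Fintype F] [DecidableEq F] (n : ℕ)
    (μ : Ω → ℝ) (hμ0 : ∀ ω, 0 ≤ μ ω) (hμ1 : ∑ ω, μ ω = 1)
    (X : Ω → (Fin n → Bool))
    (hX : ∀ x : Fin n → Bool, ∑ ω ∈ univ.filter (fun ω => X ω = x), μ ω = 1 / 2 ^ n)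
    (Y : Ω → F) (K γ : ℝ) (hγ0 : 0 < γ) (hγ1 : γ ≤ 1 / 2)
    (hK : entropy μ Y ≤ K)
    (g : Fin n → F → Bool)
    (hg : ∀ i : Fin n, 1 / 2 + γ ≤ ∑ ω ∈ univ.filter (fun ω => g i (Y ω) = X ω i), μ ω) :
    (n : ℝ) ≤ n * binEnt (1 / 2 - γ) + K := by
  set e := 1 / 2 - γ with he_def
  have he0 : 0 ≤ e := by linarith
  have he : e ≤ 1 / 2 := by linarith
  have hguess (i : Fin n) :
      1 - e ≤ ∑ ω ∈ univ.filter (fun ω => g i (Y ω) = X ω i), μ ω := by linarith [hg i]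
  have hpos (ω : Ω) (hω : μ ω ≠ 0) (i : Fin n) : 0 < guessWeight e (g i (Y ω)) (X ω i) :=
    guessWeight_pos hμ0 hμ1 he (hguess i) hω
  let q : (Fin n → Bool) × F → ℝ := fun z => law μ Y z.2 * ∏ i, guessWeight e (g i z.2) (z.1 i)
  have hq0 (z) : 0 ≤ q z := mul_nonneg (law_nonneg hμ0 Y z.2)
    (prod_nonneg fun i _ => guessWeight_nonneg he0 (by linarith) _ _)
  have hq1 : ∑ z, q z = ∑ ω, μ ω := by
    simp only [q, Fintype.sum_prod_type, ← sum_law μ Y]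
    rw [sum_comm]
    simp only [← mul_sum, sum_prod_guessWeight, mul_one]
  have hn : (n : ℝ) = -logb 2 (1 / 2 ^ n) := by
    rw [one_div, logb_inv, neg_neg, logb_pow, logb_self_eq_one one_lt_two, mul_one]
  calc (n : ℝ) ≤ entropy μ (fun ω => (X ω, Y ω)) :=
        hn ▸ neg_logb_le_entropy hμ0 hμ1 _ fun ω _ =>
          hX (X ω) ▸ law_prodMk_le_law_fst hμ0 X Y _ _
    _ ≤ -∑ ω, μ ω * logb 2 (q (X ω, Y ω)) :=
        entropy_le_neg_sum_mul_logb hμ0 _ hq0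
          (fun ω hω => mul_pos (law_pos hμ0 Y hω) (prod_pos fun i _ => hpos ω hω i)) hq1.le
    _ = entropy μ Y + ∑ i, -∑ ω, μ ω * logb 2 (guessWeight e (g i (Y ω)) (X ω i)) := by
        rw [entropy_eq_neg_sum_mul_logb_law μ Y]
        exact neg_sum_mul_logb_mul_prod (fun ω hω => law_pos hμ0 Y hω) hpos
    _ ≤ K + ∑ _i : Fin n, binEnt e :=
        add_le_add hK (sum_le_sum fun i _ =>
          neg_sum_mul_logb_guessWeight_le_binEnt hμ1 he0 he (hguess i))
    _ = n * binEnt e + K := by simp [add_comm]
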